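/- arXiv:2406.05086 — 4 statements merged into one kernel-verified Lean document; each statement's English description precedes it below -/
import Mathlib

section
/- Let M be a nonempty compact convex subset of a finite-dimensional real vector space V, and let r : V → ℝ be linear. For a vector x in a finite-dimensional space, suppose there exists c > 0 such that for every v with ‖v‖₁ ≤ 1, the point x + c·v lies in the set P_m = {x' : ⟨r₂(x'), m⟩ ≥ ⟨r₂(x'), m'⟩ for all m' ∈ M}, where r₂(x') is an affine function of x'. Then for every m' ∈ M with ⟨r₂(x), m'⟩ = ⟨r₂(x), m⟩ (i.e., m' is also a best response at x), the linear functional defining the perturbation vanishes on m - m'. Concretely: if f, g : ℝ^d → (V → ℝ) with f(x')(m) = ⟨r + L x', m⟩ for a linear map L : ℝ^d → V*, and m maximizes f(x + cv) over M for all ‖v‖₁ ≤ 1, then any m' ∈ M maximizing f(x) satisfies L(e_i)(m - m') = 0 for every standard basis vector e_i. -/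
/-!
Put `δ := m - m'` and `F y := (r + L y) δ = r δ + L y δ`, an affine function of the allocation.
Since `m'` is a best response at `x`, `F x ≤ 0`; since `m` is a best response on the whole ℓ¹-ball
of radius `c` around `x`, `F ≥ 0` there, in particular at `x ± c eᵢ`. An affine function that is
nonpositive at the centre of a segment and nonnegative at both ends is constant along it, so the
linear part `L eᵢ δ` vanishes.
-/

lemma LinearMap.apply_eq_zero_of_nonpos_of_nonneg_add_smul {E : Type*} [AddCommGroup E]
    [Module ℝ E] (g : E →ₗ[ℝ] ℝ) {a c : ℝ} (hc : 0 < c) {x w : E} (hx : a + g x ≤ 0)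
    (hpos : 0 ≤ a + g (x + c • w)) (hneg : 0 ≤ a + g (x + c • -w)) : g w = 0 := by
  simp only [map_add, map_smul, map_neg, smul_eq_mul] at hpos hneg
  have h₁ : 0 ≤ c * g w := by linarith
  have h₂ : c * g w ≤ 0 := by linarith
  exact (mul_eq_zero.mp (le_antisymm h₂ h₁)).resolve_left hc.ne'

lemma sum_abs_pi_single {ι : Type*} [Fintype ι] [DecidableEq ι] (i : ι) (s : ℝ) :
    ∑ j, |(Pi.single i s : ι → ℝ) j| = |s| := by
  simp_rw [Pi.apply_single (fun _ ↦ abs) (fun _ ↦ abs_zero), Finset.sum_pi_single']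
  simp

theorem interior_point_allocation_perturbation_vanishes_general
    {V : Type*} [NormedAddCommGroup V] [NormedSpace ℝ V]
    {d : ℕ} (M : Set V)
    (r : V →ₗ[ℝ] ℝ) (L : (Fin d → ℝ) →ₗ[ℝ] (V →ₗ[ℝ] ℝ))
    (x : Fin d → ℝ) (c : ℝ) (hc : 0 < c)
    (m : V) (hm : m ∈ M)
    (hint : ∀ v : Fin d → ℝ, (∑ i, |v i|) ≤ 1 →
      ∀ m' ∈ M, (r + L (x + c • v)) m' ≤ (r + L (x + c • v)) m)
    (m' : V) (hm' : m' ∈ M)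
    (hbr' : ∀ m'' ∈ M, (r + L x) m'' ≤ (r + L x) m') :
    ∀ i : Fin d, (L (Pi.single i 1)) (m - m') = 0 := by
  intro i
  have hF : ∀ y, (r + L y) (m - m') = r (m - m') + L.flip (m - m') y := fun y ↦ by
    simp only [LinearMap.add_apply, LinearMap.flip_apply]
  have hnonneg : ∀ s : ℝ, |s| = 1 →
      0 ≤ (r + L (x + c • (Pi.single i s : Fin d → ℝ))) (m - m') := fun s hs ↦ by
    rw [map_sub, sub_nonneg]
    exact hint _ (by rw [sum_abs_pi_single, hs]) m' hm'
  have hpos := hnonneg 1 abs_one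
  have hneg := hnonneg (-1) (by simp)
  rw [Pi.single_neg] at hneg
  rw [hF] at hpos hneg
  refine (L.flip (m - m')).apply_eq_zero_of_nonpos_of_nonneg_add_smul hc ?_ hpos hneg
  rw [← hF, map_sub, sub_nonpos]
  exact hbr' m hm

/-- If `x` is an interior-point allocation of the region where `m` is a
best response (with margin `c > 0` in the ℓ¹ norm), then for any other best response
`m'` of `x`, the perturbation functionals `L e_i` vanish on `m - m'`. -/
theorem interior_point_allocation_perturbation_vanishes
    {V : Type*} [NormedAddCommGroup V] [NormedSpace ℝ V] [FiniteDimensional ℝ V]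
    {d : ℕ} (M : Set V) (hMne : M.Nonempty) (hMcpt : IsCompact M) (hMconv : Convex ℝ M)
    (r : V →ₗ[ℝ] ℝ) (L : (Fin d → ℝ) →ₗ[ℝ] (V →ₗ[ℝ] ℝ))
    (x : Fin d → ℝ) (c : ℝ) (hc : 0 < c)
    (m : V) (hm : m ∈ M)
    (hint : ∀ v : Fin d → ℝ, (∑ i, |v i|) ≤ 1 →
      ∀ m' ∈ M, (r + L (x + c • v)) m' ≤ (r + L (x + c • v)) m)
    (m' : V) (hm' : m' ∈ M)
    (hbr' : ∀ m'' ∈ M, (r + L x) m'' ≤ (r + L x) m') :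
    ∀ i : Fin d, (L (Pi.single i 1)) (m - m') = 0 :=
  interior_point_allocation_perturbation_vanishes_general M r L x c hc m hm hint m' hm' hbr'
end

section
/- Under the setup of the previous statement, let r₁ ∈ ℝ^n be another linear functional such that ⟨r₁, v⟩ = ⟨r₁, m⋆⟩ for all v ∈ V⋆ (where m⋆ attains μ) and ⟨r₁, v⟩ ≥ 0 for all v ∈ V'. If m ∈ M satisfies μ − ⟨r, m⟩ ≤ ε, then ⟨r₁, m⟩ ≥ (1 − ε/b) · ⟨r₁, m⋆⟩, provided ⟨r₁, m⋆⟩ ≥ 0. -/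
/-- With vertices partitioned into optimal vertices `V⋆` (value `μ`, with
leader payoff equal to `⟨r₁, m⋆⟩`) and suboptimal vertices `V'` (value at most `μ - b`,
with nonnegative leader payoff), any `ε`-optimal `m ∈ M` satisfies
`⟨r₁, m⟩ ≥ (1 - ε/b)·⟨r₁, m⋆⟩`, provided `⟨r₁, m⋆⟩ ≥ 0`. -/
theorem near_optimal_leader_payoff_bound
    {n : ℕ} (Vs Vp : Finset (Fin n → ℝ)) (hdisj : Disjoint Vs Vp)
    (r r₁ : Fin n → ℝ) (μ b ε : ℝ) (hb : 0 < b)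
    (hmax : ∀ m' ∈ convexHull ℝ (↑(Vs ∪ Vp) : Set (Fin n → ℝ)),
      ∑ i, r i * m' i ≤ μ)
    (hVs : ∀ v ∈ Vs, ∑ i, r i * v i = μ)
    (hVp : ∀ v ∈ Vp, ∑ i, r i * v i ≤ μ - b)
    (mstar : Fin n → ℝ) (hmstar : mstar ∈ convexHull ℝ (↑(Vs ∪ Vp) : Set (Fin n → ℝ)))
    (hmstarμ : ∑ i, r i * mstar i = μ)
    (hr₁Vs : ∀ v ∈ Vs, ∑ i, r₁ i * v i = ∑ i, r₁ i * mstar i)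
    (hr₁Vp : ∀ v ∈ Vp, 0 ≤ ∑ i, r₁ i * v i)
    (hr₁star : 0 ≤ ∑ i, r₁ i * mstar i)
    (m : Fin n → ℝ) (hm : m ∈ convexHull ℝ (↑(Vs ∪ Vp) : Set (Fin n → ℝ)))
    (hε : μ - ∑ i, r i * m i ≤ ε) :
    (1 - ε / b) * (∑ i, r₁ i * mstar i) ≤ ∑ i, r₁ i * m i := by
  rw [Finset.convexHull_eq] at hm
  obtain ⟨w, hw0, hw1, hwm⟩ := hm
  rw [Finset.centerMass_eq_of_sum_1 _ _ hw1] at hwm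
  have key : ∀ c : Fin n → ℝ,
      ∑ i, c i * m i = ∑ v ∈ Vs ∪ Vp, w v * ∑ i, c i * v i := by
    intro c
    subst hwm
    simp only [Finset.sum_apply, Pi.smul_apply, id_eq, smul_eq_mul, Finset.mul_sum]
    rw [Finset.sum_comm]
    refine Finset.sum_congr rfl fun v _ => ?_
    exact Finset.sum_congr rfl fun i _ => by ring
  set A := ∑ i, r₁ i * mstar i with hA
  set s := ∑ v ∈ Vs, w v with hs
  set t := ∑ v ∈ Vp, w v with ht
  have hst : s + t = 1 := by
    rw [hs, ht, ← Finset.sum_union hdisj, hw1]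
  have hs0 : 0 ≤ s := Finset.sum_nonneg fun v hv => hw0 v (Finset.mem_union_left _ hv)
  have ht0 : 0 ≤ t := Finset.sum_nonneg fun v hv => hw0 v (Finset.mem_union_right _ hv)
  -- bound on t
  have hrm : ∑ i, r i * m i ≤ s * μ + t * (μ - b) := by
    rw [key r, Finset.sum_union hdisj]
    have h1 : ∑ v ∈ Vs, w v * ∑ i, r i * v i = s * μ := by
      rw [hs, Finset.sum_mul]
      exact Finset.sum_congr rfl fun v hv => by rw [hVs v hv]
    have h2 : ∑ v ∈ Vp, w v * ∑ i, r i * v i ≤ t * (μ - b) := by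
      rw [ht, Finset.sum_mul]
      exact Finset.sum_le_sum fun v hv =>
        mul_le_mul_of_nonneg_left (hVp v hv) (hw0 v (Finset.mem_union_right _ hv))
    linarith
  have htb : t * b ≤ ε := by
    have hs' : s = 1 - t := by linarith
    have : s * μ + t * (μ - b) = μ - t * b := by rw [hs']; ring
    linarith
  have htε : t ≤ ε / b := by
    rw [le_div_iff₀ hb]; exact htb
  -- lower bound on payoff
  have hlow : s * A ≤ ∑ i, r₁ i * m i := by
    rw [key r₁, Finset.sum_union hdisj]
    have h1 : ∑ v ∈ Vs, w v * ∑ i, r₁ i * v i = s * A := by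
      rw [hs, Finset.sum_mul]
      exact Finset.sum_congr rfl fun v hv => by rw [hr₁Vs v hv]
    have h2 : 0 ≤ ∑ v ∈ Vp, w v * ∑ i, r₁ i * v i :=
      Finset.sum_nonneg fun v hv =>
        mul_nonneg (hw0 v (Finset.mem_union_right _ hv)) (hr₁Vp v hv)
    linarith
  have : (1 - ε / b) * A ≤ s * A := by
    apply mul_le_mul_of_nonneg_right _ hr₁star
    linarith
  linarith
end

section
/- Let M ⊆ ℝ^n be compact convex, and define BR(x) ⊆ M for x ∈ ℝ^d by BR(x) = argmax_{m∈M} ⟨r + Lx, m⟩ where r ∈ ℝ^n and L : ℝ^d → ℝ^n is linear with L(1)(s,a)-component pattern: (L·1) = r₁ where r₁ ∈ ℝ^n is a fixed nonnegative vector. Suppose x⋆ is an interior point of P_{m₁} = {x : m₁ ∈ BR(x)}, and suppose m₂ ∈ BR(x⋆) with ⟨r₁, m₁⟩ > ⟨r₁, m₂⟩. Derive a contradiction: for every ε > 0, the point x(ε) = x⋆ − ε·1 satisfies ⟨r + L x(ε), m₁⟩ < ⟨r + L x(ε), m₂⟩, hence x(ε) ∉ P_{m₁}, so x⋆ is not interior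 to P_{m₁}. -/
/-! Moving the allocation from `x⋆` in the direction `-1` lowers the follower's payoff of a
policy `m` at rate `⟨L 1, m⟩ = ⟨r₁, m⟩`. Since `m₂` is already a best response at `x⋆`
and `m₂` loses value more slowly than `m₁`, every such move makes `m₂` strictly better
than `m₁`; yet an interior point of `{x : m₁ ∈ BR(x)}` stays in the region after a small
move in any direction. -/

open Filter Topology

theorem exists_pos_sub_smul_mem_of_mem_interior {E : Type*} [AddCommGroup E] [Module ℝ E]
    [TopologicalSpace E] [ContinuousSub E] [ContinuousSMul ℝ E] {S : Set E} {x : E}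
    (hx : x ∈ interior S) (v : E) : ∃ t > (0 : ℝ), x - t • v ∈ S := by
  have hcont : Tendsto (fun t : ℝ => x - t • v) (𝓝[>] 0) (𝓝 x) := by
    have : Continuous fun t : ℝ => x - t • v := by fun_prop
    simpa using (this.tendsto 0).mono_left nhdsWithin_le_nhds
  exact ((hcont.eventually (mem_interior_iff_mem_nhds.mp hx)).and
    self_mem_nhdsWithin).exists.imp fun t ht => ⟨ht.2, ht.1⟩

theorem add_map_sub_smul_dotProduct {ι E : Type*} [Fintype ι] [AddCommGroup E] [Module ℝ E]
    (r : ι → ℝ) (L : E →ₗ[ℝ] (ι → ℝ)) (x v : E) (m : ι → ℝ) (t : ℝ) :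
    (r + L (x - t • v)) ⬝ᵥ m = (r + L x) ⬝ᵥ m - t * (L v ⬝ᵥ m) := by
  simp only [map_sub, map_smul, add_sub, sub_dotProduct, smul_dotProduct, smul_eq_mul]

theorem add_map_sub_smul_dotProduct_lt {ι E : Type*} [Fintype ι] [AddCommGroup E]
    [Module ℝ E] {r : ι → ℝ} {L : E →ₗ[ℝ] (ι → ℝ)} {x v : E} {m₁ m₂ : ι → ℝ} {t : ℝ}
    (hbr : (r + L x) ⬝ᵥ m₁ ≤ (r + L x) ⬝ᵥ m₂) (hlt : L v ⬝ᵥ m₂ < L v ⬝ᵥ m₁) (ht : 0 < t) :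
    (r + L (x - t • v)) ⬝ᵥ m₁ < (r + L (x - t • v)) ⬝ᵥ m₂ := by
  rw [add_map_sub_smul_dotProduct, add_map_sub_smul_dotProduct]
  linarith [mul_lt_mul_of_pos_left hlt ht]

theorem interior_allocation_equal_leader_payoff_general
    {n d : ℕ} (M : Set (Fin n → ℝ))
    (r r₁ : Fin n → ℝ) (L : (Fin d → ℝ) →ₗ[ℝ] (Fin n → ℝ))
    (hL1 : L (fun _ => (1 : ℝ)) = r₁)
    (xstar : Fin d → ℝ) (m₁ m₂ : Fin n → ℝ)
    (hm₁ : m₁ ∈ M) (hm₂ : m₂ ∈ M)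
    (hbr₂ : ∀ m' ∈ M, ∑ i, (r i + L xstar i) * m' i ≤ ∑ i, (r i + L xstar i) * m₂ i)
    (hlt : ∑ i, r₁ i * m₂ i < ∑ i, r₁ i * m₁ i)
    (hint : xstar ∈ interior {x : Fin d → ℝ |
      ∀ m' ∈ M, ∑ i, (r i + L x i) * m' i ≤ ∑ i, (r i + L x i) * m₁ i}) :
    False := by
  obtain ⟨t, ht, hbr₁⟩ := exists_pos_sub_smul_mem_of_mem_interior hint fun _ => 1
  have hlt' : L (fun _ => 1) ⬝ᵥ m₂ < L (fun _ => 1) ⬝ᵥ m₁ := hL1 ▸ hlt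
  exact (hbr₁ m₂ hm₂).not_gt (add_map_sub_smul_dotProduct_lt (hbr₂ m₁ hm₁) hlt' ht)

/-- If `x⋆` is an interior point of the allocation region of `m₁`, and
`m₁, m₂` are both best responses at `x⋆` with `⟨r₁, m₁⟩ > ⟨r₁, m₂⟩` (where `r₁ = L 1`
is the nonnegative leader reward), then a contradiction follows: decreasing all
allocations by `ε` makes `m₁` strictly worse than `m₂`, so `x⋆` cannot be interior. -/
theorem interior_allocation_equal_leader_payoff
    {n d : ℕ} (M : Set (Fin n → ℝ)) (hMcpt : IsCompact M) (hMconv : Convex ℝ M)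
    (r r₁ : Fin n → ℝ) (L : (Fin d → ℝ) →ₗ[ℝ] (Fin n → ℝ))
    (hL1 : L (fun _ => (1 : ℝ)) = r₁) (hr₁ : ∀ i, 0 ≤ r₁ i)
    (xstar : Fin d → ℝ) (m₁ m₂ : Fin n → ℝ)
    (hm₁ : m₁ ∈ M) (hm₂ : m₂ ∈ M)
    (hbr₁ : ∀ m' ∈ M, ∑ i, (r i + L xstar i) * m' i ≤ ∑ i, (r i + L xstar i) * m₁ i)
    (hbr₂ : ∀ m' ∈ M, ∑ i, (r i + L xstar i) * m' i ≤ ∑ i, (r i + L xstar i) * m₂ i)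
    (hlt : ∑ i, r₁ i * m₂ i < ∑ i, r₁ i * m₁ i)
    (hint : xstar ∈ interior {x : Fin d → ℝ |
      ∀ m' ∈ M, ∑ i, (r i + L x i) * m' i ≤ ∑ i, (r i + L x i) * m₁ i}) :
    False :=
  interior_allocation_equal_leader_payoff_general M r r₁ L hL1 xstar m₁ m₂ hm₁ hm₂ hbr₂ hlt hint
end

section
/- Let M be a compact convex polytope in ℝ^n with vertex set V, and r, r₁ ∈ ℝ^n. Define v₁⋆ = ⟨r₁, m⋆⟩ for a maximizer m⋆ of ⟨r,·⟩ over M, let V⋆ = {v ∈ V : ⟨r,v⟩ = ⟨r, m⋆⟩}, and assume ⟨r₁, v⟩ = v₁⋆ for all v ∈ V⋆ and b = ⟨r,m⋆⟩ − max_{v ∈ V∖V⋆} ⟨r,v⟩ > 0. For ε > 0 define v_ε = min { ⟨r₁, m⟩ : m ∈ M, ⟨r, m⋆⟩ − ⟨r, m⟩ ≤ ε }. Then v₁⋆ − v_ε ≤ (ε/b) · max_{v∈V} (v₁⋆ − ⟨r₁, v⟩), and in particular lim_{ε→0⁺} v_ε = v₁⋆. -/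
/-- If all optimal vertices of the polytope `M = convexHull V` (for the
follower objective `⟨r,·⟩`) share the same leader payoff `v₁⋆ = ⟨r₁, m⋆⟩`, and the
suboptimality gap among vertices is `b > 0`, then for every `ε`-optimal `m ∈ M` the
leader payoff satisfies `v₁⋆ - ⟨r₁, m⟩ ≤ (ε/b)·max_{v∈V}(v₁⋆ - ⟨r₁, v⟩)`; in particular
the worst leader payoff among `ε`-optimal responses converges to `v₁⋆` as `ε → 0⁺`. -/
theorem relaxed_pessimistic_value_bound
    {n : ℕ} (V : Finset (Fin n → ℝ)) (hV : V.Nonempty)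
    (r r₁ : Fin n → ℝ) (b : ℝ) (hb : 0 < b)
    (mstar : Fin n → ℝ) (hmstar : mstar ∈ convexHull ℝ (↑V : Set (Fin n → ℝ)))
    (hmax : ∀ m' ∈ convexHull ℝ (↑V : Set (Fin n → ℝ)),
      ∑ i, r i * m' i ≤ ∑ i, r i * mstar i)
    (hr₁opt : ∀ v ∈ V, ∑ i, r i * v i = ∑ i, r i * mstar i →
      ∑ i, r₁ i * v i = ∑ i, r₁ i * mstar i)
    (hgap : ∀ v ∈ V, ∑ i, r i * v i ≠ ∑ i, r i * mstar i →
      ∑ i, r i * v i ≤ (∑ i, r i * mstar i) - b) :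
    ∀ ε : ℝ, 0 ≤ ε → ∀ m ∈ convexHull ℝ (↑V : Set (Fin n → ℝ)),
      (∑ i, r i * mstar i) - (∑ i, r i * m i) ≤ ε →
      (∑ i, r₁ i * mstar i) - (∑ i, r₁ i * m i)
        ≤ (ε / b) * V.sup' hV (fun v => (∑ i, r₁ i * mstar i) - ∑ i, r₁ i * v i) := by
  intro ε hε m hm hεopt
  set A := ∑ i, r i * mstar i with hA
  set B := ∑ i, r₁ i * mstar i with hB
  set g := V.sup' hV (fun v => B - ∑ i, r₁ i * v i) with hg
  rw [Finset.convexHull_eq] at hm hmstar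
  obtain ⟨w, hw0, hw1, hwm⟩ := hm
  obtain ⟨w', hw'0, hw'1, hwm'⟩ := hmstar
  have key : ∀ (w : (Fin n → ℝ) → ℝ) (x : Fin n → ℝ),
      V.centerMass w id = x → (∑ v ∈ V, w v = 1) →
      ∀ c : Fin n → ℝ, ∑ i, c i * x i = ∑ v ∈ V, w v * ∑ i, c i * v i := by
    intro w x hx hsum c
    rw [← hx, Finset.centerMass_eq_of_sum_1 _ id hsum]
    simp only [Finset.sum_apply, Pi.smul_apply, smul_eq_mul, id]
    simp only [Finset.mul_sum]
    rw [Finset.sum_comm]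
    refine Finset.sum_congr rfl fun v _ => ?_
    exact Finset.sum_congr rfl fun i _ => by ring
  have keym := key w m hwm hw1
  have keyst := key w' mstar hwm' hw'1
  -- every vertex has follower value ≤ A
  have hvA : ∀ v ∈ V, ∑ i, r i * v i ≤ A := fun v hv =>
    hmax v (subset_convexHull ℝ _ hv)
  -- there is an optimal vertex
  have hgood : ∃ v ∈ V, ∑ i, r i * v i = A := by
    by_contra h
    push_neg at h
    have hle : ∀ v ∈ V, w' v * (∑ i, r i * v i) ≤ w' v * (A - b) := fun v hv =>
      mul_le_mul_of_nonneg_left (hgap v hv (h v hv)) (hw'0 v hv)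
    have h1 : A = ∑ v ∈ V, w' v * ∑ i, r i * v i := keyst r
    have h2 : (∑ v ∈ V, w' v * (A - b)) = A - b := by
      rw [← Finset.sum_mul, hw'1, one_mul]
    have := Finset.sum_le_sum hle
    rw [h2] at this
    linarith [h1 ▸ this]
  obtain ⟨v₀, hv₀V, hv₀⟩ := hgood
  have hgnn : 0 ≤ g := by
    have h : B - ∑ i, r₁ i * v₀ i ≤ g :=
      Finset.le_sup' (fun v => B - ∑ i, r₁ i * v i) hv₀V
    rw [hr₁opt v₀ hv₀V hv₀] at h
    linarith
  -- termwise bound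
  have hterm : ∀ v ∈ V, w v * (B - ∑ i, r₁ i * v i)
      ≤ w v * ((g / b) * (A - ∑ i, r i * v i)) := by
    intro v hv
    by_cases hvopt : ∑ i, r i * v i = A
    · rw [hr₁opt v hv hvopt, hvopt]
      simp
    · have h1 : B - ∑ i, r₁ i * v i ≤ g := Finset.le_sup' (fun v => B - ∑ i, r₁ i * v i) hv
      have h2 : b ≤ A - ∑ i, r i * v i := by
        have := hgap v hv hvopt; linarith
      have h3 : 0 ≤ w v := hw0 v hv
      have h4 : g ≤ (g / b) * (A - ∑ i, r i * v i) := by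
        rw [div_mul_eq_mul_div, le_div_iff₀ hb]
        exact mul_le_mul_of_nonneg_left h2 hgnn
      exact mul_le_mul_of_nonneg_left (h1.trans h4) h3
  have hsum := Finset.sum_le_sum hterm
  have lhs_eq : ∑ v ∈ V, w v * (B - ∑ i, r₁ i * v i) = B - ∑ i, r₁ i * m i := by
    rw [keym r₁]
    simp only [mul_sub]
    rw [Finset.sum_sub_distrib, ← Finset.sum_mul, hw1, one_mul]
  have rhs_eq : ∑ v ∈ V, w v * ((g / b) * (A - ∑ i, r i * v i))
      = (g / b) * (A - ∑ i, r i * m i) := by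
    rw [keym r]
    have he : ∀ v ∈ V, w v * ((g / b) * (A - ∑ i, r i * v i))
        = (g / b) * (w v * A - w v * ∑ i, r i * v i) := fun v _ => by ring
    rw [Finset.sum_congr rfl he, ← Finset.mul_sum, Finset.sum_sub_distrib,
      ← Finset.sum_mul, hw1, one_mul, mul_sub]
  rw [lhs_eq, rhs_eq] at hsum
  have hfinal : (g / b) * (A - ∑ i, r i * m i) ≤ (g / b) * ε :=
    mul_le_mul_of_nonneg_left hεopt (div_nonneg hgnn hb.le)
  calc B - ∑ i, r₁ i * m i ≤ (g / b) * ε := hsum.trans hfinal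
    _ = (ε / b) * g := by ring
end
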